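/- arXiv:2211.08563 — 5 statements merged into one kernel-verified Lean document; each statement's English description precedes it below -/
import Mathlib

section
/- For any non-negative real-valued random variable X with finite expectation, there exists t ∈ [0, E[X]+1] such that e^t / Pr(X < t) ≤ e^{E[X]+1} (in particular Pr(X < t) > 0 for this t). -/
open MeasureTheory ProbabilityTheory Real

/-!
Put `c = E[X] + 1` and suppose `Pr(X < t) ≤ e^(t - c)` for every `t ∈ (0, c]`. By the layer-cake
formula, `E[X] = ∫₀^∞ Pr(X ≥ t) dt ≥ ∫₀^c (1 - e^(t - c)) dt = c - 1 + e^(-c) > E[X]`,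
a contradiction. So some `t ∈ (0, c]` has `Pr(X < t) > e^(t - c)`, which is the claim.
-/

lemma integral_one_sub_exp_sub {c : ℝ} (hc : 0 ≤ c) :
    ∫ t in Set.Ioc 0 c, (1 - exp (t - c)) = c - 1 + exp (-c) := by
  rw [← intervalIntegral.integral_of_le hc,
    intervalIntegral.integral_sub intervalIntegrable_const
      ((by fun_prop : Continuous fun t => exp (t - c)).intervalIntegrable _ _),
    intervalIntegral.integral_const, intervalIntegral.integral_comp_sub_right (fun x => exp x),
    integral_exp]
  simp only [sub_self, exp_zero, zero_sub, smul_eq_mul, mul_one, sub_zero]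
  ring

section

variable {Ω : Type*} [MeasurableSpace Ω] {μ : Measure Ω} [IsProbabilityMeasure μ] {f : Ω → ℝ}

lemma one_sub_measure_lt_le_measure_le (f : Ω → ℝ) (t : ℝ) :
    1 - μ {ω | f ω < t} ≤ μ {ω | t ≤ f ω} := by
  have hcompl : {ω | f ω < t}ᶜ = {ω | t ≤ f ω} := by ext; simp
  rw [tsub_le_iff_left, ← hcompl, ← measure_univ (μ := μ)]
  exact measure_univ_le_add_compl _

lemma setLIntegral_one_sub_measure_lt_le_lintegral (hf0 : 0 ≤ᵐ[μ] f) (hf : AEMeasurable f μ)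
    {s : Set ℝ} (hs : s ⊆ Set.Ioi 0) :
    ∫⁻ t in s, (1 - μ {ω | f ω < t}) ≤ ∫⁻ ω, ENNReal.ofReal (f ω) ∂μ := by
  rw [lintegral_eq_lintegral_meas_le μ hf0 hf]
  calc ∫⁻ t in s, (1 - μ {ω | f ω < t})
      ≤ ∫⁻ t in s, μ {ω | t ≤ f ω} :=
        lintegral_mono fun t => one_sub_measure_lt_le_measure_le f t
    _ ≤ ∫⁻ t in Set.Ioi 0, μ {ω | t ≤ f ω} := lintegral_mono_set hs

lemma le_integral_of_measure_lt_le_exp_sub (hf0 : 0 ≤ᵐ[μ] f) (hf : Integrable f μ) {c : ℝ}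
    (hc : 0 ≤ c) (hcdf : ∀ t ∈ Set.Ioc 0 c, (μ {ω | f ω < t}).toReal ≤ exp (t - c)) :
    c - 1 + exp (-c) ≤ ∫ ω, f ω ∂μ := by
  have hpoint : ∀ t ∈ Set.Ioc 0 c, ENNReal.ofReal (1 - exp (t - c)) ≤ 1 - μ {ω | f ω < t} := by
    intro t ht
    rw [ENNReal.ofReal_sub _ (exp_pos _).le, ENNReal.ofReal_one]
    exact tsub_le_tsub_left ((ENNReal.le_ofReal_iff_toReal_le (measure_ne_top μ _)
      (exp_pos _).le).mpr (hcdf t ht)) 1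
  have hnonneg : ∀ t ∈ Set.Ioc 0 c, 0 ≤ 1 - exp (t - c) := fun t ht => by
    linarith [exp_le_one_iff.mpr (sub_nonpos.mpr ht.2)]
  have hint : IntegrableOn (fun t => 1 - exp (t - c)) (Set.Ioc 0 c) :=
    (by fun_prop : Continuous fun t => 1 - exp (t - c)).integrableOn_Icc.mono_set
      Set.Ioc_subset_Icc_self
  rw [← ENNReal.ofReal_le_ofReal_iff (integral_nonneg_of_ae hf0), ← integral_one_sub_exp_sub hc,
    ofReal_integral_eq_lintegral_ofReal hint (ae_restrict_of_forall_mem measurableSet_Ioc hnonneg),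
    ofReal_integral_eq_lintegral_ofReal hf hf0]
  calc ∫⁻ t in Set.Ioc 0 c, ENNReal.ofReal (1 - exp (t - c))
      ≤ ∫⁻ t in Set.Ioc 0 c, (1 - μ {ω | f ω < t}) :=
        setLIntegral_mono' measurableSet_Ioc hpoint
    _ ≤ ∫⁻ ω, ENNReal.ofReal (f ω) ∂μ :=
        setLIntegral_one_sub_measure_lt_le_lintegral hf0 hf.aemeasurable Set.Ioc_subset_Ioi_self

end

theorem exists_good_threshold_general {Ω : Type*} [MeasurableSpace Ω]
    (μ : Measure Ω) [IsProbabilityMeasure μ]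
    (X : Ω → ℝ) (hXint : Integrable X μ)
    (hX0 : ∀ ω, 0 ≤ X ω) :
    ∃ t ∈ Set.Icc (0 : ℝ) ((∫ ω, X ω ∂μ) + 1),
      0 < (μ {ω | X ω < t}).toReal ∧
      Real.exp t / (μ {ω | X ω < t}).toReal ≤ Real.exp ((∫ ω, X ω ∂μ) + 1) := by
  set c := (∫ ω, X ω ∂μ) + 1
  have hX0' : 0 ≤ᵐ[μ] X := Filter.Eventually.of_forall hX0
  have hc : 0 ≤ c := add_nonneg (integral_nonneg hX0) zero_le_one
  obtain ⟨t, ht, hlt⟩ : ∃ t ∈ Set.Ioc 0 c, exp (t - c) < (μ {ω | X ω < t}).toReal := by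
    by_contra! hcdf
    linarith [le_integral_of_measure_lt_le_exp_sub hX0' hXint hc hcdf, exp_pos (-c)]
  have hpos : 0 < (μ {ω | X ω < t}).toReal := (exp_pos _).trans hlt
  refine ⟨t, Set.Ioc_subset_Icc_self ht, hpos, ?_⟩
  calc exp t / (μ {ω | X ω < t}).toReal ≤ exp t / exp (t - c) :=
        div_le_div_of_nonneg_left (exp_pos t).le (exp_pos _) hlt.le
    _ = exp c := by rw [← exp_sub, sub_sub_cancel]

theorem exists_good_threshold {Ω : Type*} [MeasurableSpace Ω]
    (μ : Measure Ω) [IsProbabilityMeasure μ]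
    (X : Ω → ℝ) (hXm : Measurable X) (hXint : Integrable X μ)
    (hX0 : ∀ ω, 0 ≤ X ω) :
    ∃ t ∈ Set.Icc (0 : ℝ) ((∫ ω, X ω ∂μ) + 1),
      0 < (μ {ω | X ω < t}).toReal ∧
      Real.exp t / (μ {ω | X ω < t}).toReal ≤ Real.exp ((∫ ω, X ω ∂μ) + 1) :=
  exists_good_threshold_general μ X hXint hX0
end

section
/- Let E > 0 and let X have density f(x) = e^{x-(E+1)} on [0, E+1+ln(1+e^{-(E+1)})]. Then for every t ≥ 0 with Pr(X < t) > 0, e^t / Pr(X < t) > e^{E+1}. -/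
open MeasureTheory Real Set

lemma integral_Icc_exp_sub {a b : ℝ} (c : ℝ) (hab : a ≤ b) :
    ∫ x in Icc a b, exp (x - c) = exp (b - c) - exp (a - c) := by
  rw [integral_Icc_eq_integral_Ioc, ← intervalIntegral.integral_of_le hab,
    intervalIntegral.integral_comp_sub_right, integral_exp]

lemma lintegral_Icc_ofReal_exp_sub {a b : ℝ} (c : ℝ) (hab : a ≤ b) :
    ∫⁻ x in Icc a b, ENNReal.ofReal (exp (x - c)) =
      ENNReal.ofReal (exp (b - c) - exp (a - c)) := by
  rw [← integral_Icc_exp_sub c hab, ofReal_integral_eq_lintegral_ofReal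
    (by fun_prop : Continuous fun x => exp (x - c)).integrableOn_Icc
    (.of_forall fun x => (exp_pos _).le)]

lemma withDensity_exp_sub_Iio_le {a t : ℝ} (L c : ℝ) (hat : a ≤ t) :
    (volume.restrict (Icc a L)).withDensity (fun x => ENNReal.ofReal (exp (x - c))) (Iio t) ≤
      ENNReal.ofReal (exp (t - c) - exp (a - c)) := by
  rw [withDensity_apply _ measurableSet_Iio, Measure.restrict_restrict measurableSet_Iio,
    ← lintegral_Icc_ofReal_exp_sub c hat]
  exact lintegral_mono_set fun x ⟨hxt, hax, _⟩ => ⟨hax, hxt.le⟩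

lemma exp_mul_toReal_withDensity_exp_sub_Iio_lt {a t : ℝ} (L c : ℝ) (hat : a ≤ t) :
    exp c * ((volume.restrict (Icc a L)).withDensity
      (fun x => ENNReal.ofReal (exp (x - c))) (Iio t)).toReal < exp t := by
  have hle := ENNReal.toReal_mono ENNReal.ofReal_ne_top (withDensity_exp_sub_Iio_le L c hat)
  have hnonneg : 0 ≤ exp (t - c) - exp (a - c) := sub_nonneg.2 (exp_le_exp.2 (by linarith))
  rw [ENNReal.toReal_ofReal hnonneg] at hle
  calc exp c * _ ≤ exp c * (exp (t - c) - exp (a - c)) := by gcongr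
    _ < exp c * exp (t - c) := by gcongr; linarith [exp_pos (a - c)]
    _ = exp t := by rw [← exp_add, add_sub_cancel]

theorem density_example_no_good_threshold_general (E : ℝ)
    (μ : Measure ℝ)
    (hμ : μ = (volume.restrict
        (Set.Icc (0 : ℝ) (E + 1 + Real.log (1 + Real.exp (-(E + 1)))))).withDensity
        (fun x => ENNReal.ofReal (Real.exp (x - (E + 1))))) :
    ∀ t : ℝ, 0 ≤ t → 0 < (μ (Set.Iio t)).toReal →
      Real.exp t / (μ (Set.Iio t)).toReal > Real.exp (E + 1) := by
  intro t ht hpos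
  rw [gt_iff_lt, lt_div_iff₀ hpos, hμ]
  exact exp_mul_toReal_withDensity_exp_sub_Iio_lt _ _ ht

theorem density_example_no_good_threshold (E : ℝ) (hE : 0 < E)
    (μ : Measure ℝ)
    (hμ : μ = (volume.restrict
        (Set.Icc (0 : ℝ) (E + 1 + Real.log (1 + Real.exp (-(E + 1)))))).withDensity
        (fun x => ENNReal.ofReal (Real.exp (x - (E + 1))))) :
    ∀ t : ℝ, 0 ≤ t → 0 < (μ (Set.Iio t)).toReal →
      Real.exp t / (μ (Set.Iio t)).toReal > Real.exp (E + 1) :=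
  density_example_no_good_threshold_general E μ hμ
end

section
/- Let X be a non-negative random variable with E[X] ≥ 1 (ensuring ln E[X] ≥ 0). Then either Pr(X ≤ E[X] - ln E[X]) > 1/(E[X]+1), or Pr(X ≤ E[X] + 2) > 1/(ln E[X] + 2). -/
open MeasureTheory ProbabilityTheory Real

theorem sub_mul_measureReal_lt_add_mul_measureReal_lt_le_integral {Ω : Type*}
    [MeasurableSpace Ω] {μ : Measure Ω} [IsFiniteMeasure μ] {X : Ω → ℝ} (hXm : Measurable X)
    (hXint : Integrable X μ) (hX0 : ∀ ω, 0 ≤ X ω) {a c : ℝ} (hac : a ≤ c) :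
    (c - a) * μ.real {ω | c < X ω} + a * μ.real {ω | a < X ω} ≤ ∫ ω, X ω ∂μ := by
  have hc : MeasurableSet {ω | c < X ω} := measurableSet_lt measurable_const hXm
  have ha : MeasurableSet {ω | a < X ω} := measurableSet_lt measurable_const hXm
  have hpointwise : ∀ ω, {ω | c < X ω}.indicator (fun _ => c - a) ω
      + {ω | a < X ω}.indicator (fun _ => a) ω ≤ X ω := by
    intro ω
    by_cases hcω : c < X ω
    · have haω : a < X ω := hac.trans_lt hcω
      simp only [Set.indicator_of_mem (show ω ∈ {ω | c < X ω} from hcω),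
        Set.indicator_of_mem (show ω ∈ {ω | a < X ω} from haω)]
      linarith
    · rw [Set.indicator_of_notMem (show ω ∉ {ω | c < X ω} from hcω), zero_add]
      by_cases haω : a < X ω
      · rw [Set.indicator_of_mem (show ω ∈ {ω | a < X ω} from haω)]
        exact haω.le
      · rw [Set.indicator_of_notMem (show ω ∉ {ω | a < X ω} from haω)]
        exact hX0 ω
  calc (c - a) * μ.real {ω | c < X ω} + a * μ.real {ω | a < X ω}
      = ∫ ω, ({ω | c < X ω}.indicator (fun _ => c - a) ω
          + {ω | a < X ω}.indicator (fun _ => a) ω) ∂μ := by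
        rw [integral_add ((integrable_const _).indicator hc) ((integrable_const _).indicator ha),
          integral_indicator_const _ hc, integral_indicator_const _ ha, smul_eq_mul, smul_eq_mul,
          mul_comm (c - a), mul_comm a]
    _ ≤ ∫ ω, X ω ∂μ :=
        integral_mono (((integrable_const _).indicator hc).add ((integrable_const _).indicator ha))
          hXint hpointwise

theorem two_thresholds {Ω : Type*} [MeasurableSpace Ω]
    (μ : Measure Ω) [IsProbabilityMeasure μ]
    (X : Ω → ℝ) (hXm : Measurable X) (hXint : Integrable X μ)
    (hX0 : ∀ ω, 0 ≤ X ω) (hmean : 1 ≤ ∫ ω, X ω ∂μ) :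
    (μ {ω | X ω ≤ (∫ ω, X ω ∂μ) - Real.log (∫ ω, X ω ∂μ)}).toReal
        > 1 / ((∫ ω, X ω ∂μ) + 1) ∨
    (μ {ω | X ω ≤ (∫ ω, X ω ∂μ) + 2}).toReal
        > 1 / (Real.log (∫ ω, X ω ∂μ) + 2) := by
  set m := ∫ ω, X ω ∂μ
  have hlog_nonneg : 0 ≤ log m := log_nonneg hmean
  have hlog_le : log m ≤ m - 1 := log_le_sub_one_of_pos (by linarith)
  have hle_eq (b : ℝ) : (μ {ω | X ω ≤ b}).toReal = 1 - μ.real {ω | b < X ω} := by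
    rw [← probReal_compl_eq_one_sub (measurableSet_lt measurable_const hXm)]
    simp only [Set.compl_ofPred, not_lt, measureReal_def]
  have htail := sub_mul_measureReal_lt_add_mul_measureReal_lt_le_integral (μ := μ) hXm hXint hX0
    (show m - log m ≤ m + 2 by linarith)
  rw [hle_eq, hle_eq]
  refine or_iff_not_imp_left.2 fun hlow => ?_
  set t := 1 - μ.real {ω | m - log m < X ω}
  set q := μ.real {ω | m + 2 < X ω}
  -- `(log m + 2) q ≤ log m + (m - log m) t`, and `(m - log m) t ≤ m / (m + 1) < 1`.
  have ht : (m + 1) * t ≤ 1 := by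
    rw [not_lt, le_div_iff₀ (by linarith)] at hlow
    linarith
  have hq : (log m + 2) * q < log m + 1 := by
    nlinarith [mul_le_mul_of_nonneg_left ht (show 0 ≤ m - log m by linarith)]
  rw [gt_iff_lt, div_lt_iff₀ (by linarith)]
  linarith
end

section
/- Define λ(x) = 3 ln x and λ*(x) as the smallest k with λ^{(k)}(x) ≤ 5 (for x ≥ 5). Then for all x ≥ 5, the sum ∑_{i=0}^{λ*(x)} 1/λ^{(i)}(x) < 2. -/
open Real

noncomputable def lam (x : ℝ) : ℝ := 3 * Real.log x

noncomputable def lstar (x : ℝ) : ℕ := sInf {k : ℕ | lam^[k] x ≤ 5}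

/-!
For `x ≤ 20` at most seven terms occur, each at most `1/4`: tangent-line bounds make `lam` a
`3/5`-contraction towards a fixed point below `5`, so `lam^[6] x ≤ 5`. For `x > 20` one has
`lam x ≤ x / 2`, so the terms taken while the iterates stay above `20` add up to a geometric tail.
Both are combined by induction on `lstar x` against the bound `sumBound`, which is `< 2`.
-/

open Set

lemma iterate_sub_le_pow_mul {f : ℝ → ℝ} {s : Set ℝ} {p c : ℝ} (hs : MapsTo f s s) (hc : 0 ≤ c)
    (hf : ∀ y ∈ s, f y - p ≤ c * (y - p)) (k : ℕ) :
    ∀ y ∈ s, f^[k] y - p ≤ c ^ k * (y - p) := by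
  induction k with
  | zero => simp
  | succ k ih =>
    intro y hy
    calc f^[k] (f y) - p ≤ c ^ k * (f y - p) := ih (f y) (hs hy)
      _ ≤ c ^ k * (c * (y - p)) := mul_le_mul_of_nonneg_left (hf y hy) (pow_nonneg hc k)
      _ = c ^ (k + 1) * (y - p) := by ring

lemma lam_le_lam_add {b y : ℝ} (hb : 0 < b) (hy : 0 < y) : lam y ≤ lam b + 3 * (y / b - 1) := by
  have h : Real.log y = Real.log b + Real.log (y / b) := by
    rw [← Real.log_mul hb.ne' (div_pos hy hb).ne', mul_div_cancel₀ y hb.ne']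
  have := Real.log_le_sub_one_of_pos (div_pos hy hb)
  unfold lam
  linarith

-- `5 ^ 3 = 125 ≤ 128 = 2 ^ 7`
lemma lam_five_le : lam 5 ≤ 7 * Real.log 2 := by
  have h := Real.log_le_log (by norm_num) (show (5 : ℝ) ^ 3 ≤ 2 ^ 7 by norm_num)
  rw [Real.log_pow, Real.log_pow] at h
  push_cast at h
  rwa [lam]

lemma lam_twenty_le : lam 20 ≤ 13 * Real.log 2 := by
  have h : Real.log 20 = 2 * Real.log 2 + Real.log 5 := by
    rw [show (20 : ℝ) = 2 * 2 * 5 by norm_num, Real.log_mul (by norm_num) (by norm_num),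
      Real.log_mul (by norm_num) (by norm_num)]
    ring
  have := lam_five_le
  unfold lam at *
  linarith

lemma four_le_lam {y : ℝ} (hy : 4 ≤ y) : 4 ≤ lam y := by
  have h : Real.log 4 ≤ Real.log y := Real.log_le_log (by norm_num) hy
  rw [show (4 : ℝ) = 2 ^ 2 by norm_num, Real.log_pow] at h
  have := Real.log_two_gt_d9
  unfold lam
  push_cast at h
  linarith

lemma mapsTo_lam_Ici_four : MapsTo lam (Ici 4) (Ici 4) := fun _ hy ↦ four_le_lam hy

lemma lam_le_half {x : ℝ} (hx : 20 ≤ x) : lam x ≤ x / 2 := by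
  have := lam_le_lam_add (b := 20) (by norm_num) (by linarith : (0 : ℝ) < x)
  have := lam_twenty_le
  have := Real.log_two_lt_d9
  linarith

lemma iterate_lam_six_le_five {x : ℝ} (hx₄ : 4 ≤ x) (hx₂₀ : x ≤ 20) : lam^[6] x ≤ 5 := by
  set p := 5 / 2 * (lam 5 - 3) with hp
  -- the tangent line of `lam` at `5` makes `lam` a `3/5`-contraction towards its fixed point `p`
  have hcontract : ∀ y ∈ Ici (4 : ℝ), lam y - p ≤ 3 / 5 * (y - p) := fun y hy ↦ by
    have := lam_le_lam_add (b := 5) (by norm_num) (by linarith [mem_Ici.1 hy] : (0 : ℝ) < y)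
    linarith
  have h := iterate_sub_le_pow_mul mapsTo_lam_Ici_four (by norm_num) hcontract 5 (lam x)
    (four_le_lam hx₄)
  have hlam : lam x ≤ lam 20 := by
    unfold lam
    linarith [Real.log_le_log (by linarith) hx₂₀]
  have := lam_five_le
  have := lam_twenty_le
  have := Real.log_two_lt_d9
  rw [show (3 / 5 : ℝ) ^ 5 = 243 / 3125 by norm_num] at h
  show lam^[5] (lam x) ≤ 5
  linarith

lemma lstar_le_six {x : ℝ} (hx₄ : 4 ≤ x) (hx₂₀ : x ≤ 20) : lstar x ≤ 6 :=
  Nat.sInf_le (iterate_lam_six_le_five hx₄ hx₂₀)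

lemma lstar_lam_add_one {x : ℝ} (h : lstar x ≠ 0) : lstar (lam x) + 1 = lstar x :=
  Nat.sInf_add (Nat.one_le_iff_ne_zero.2 h)

lemma sum_range_inv_iterate_lam_le {x : ℝ} (hx : 4 ≤ x) (n : ℕ) :
    ∑ i ∈ Finset.range n, 1 / lam^[i] x ≤ n / 4 := by
  calc ∑ i ∈ Finset.range n, 1 / lam^[i] x ≤ ∑ _i ∈ Finset.range n, (1 / 4 : ℝ) :=
        Finset.sum_le_sum fun i _ ↦
          one_div_le_one_div_of_le (by norm_num) (mapsTo_lam_Ici_four.iterate i hx)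
    _ = n / 4 := by
      rw [Finset.sum_const, Finset.card_range, nsmul_eq_mul]
      ring

-- The jump at `20` pays for the term `1 / x` after which the iterates drop below `20`.
noncomputable def sumBound (x : ℝ) : ℝ := if x ≤ 20 then 7 / 4 else 37 / 20 - 1 / x

lemma sumBound_lt_two (x : ℝ) : sumBound x < 2 := by
  unfold sumBound
  split_ifs with h
  · norm_num
  · have : 0 < 1 / x := one_div_pos.2 (by linarith [not_le.1 h])
    linarith

lemma inv_add_sumBound_le {x y : ℝ} (hx : 20 < x) (hy : 0 < y) (hyx : y ≤ x / 2) :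
    1 / x + sumBound y ≤ sumBound x := by
  have hx' : ¬ x ≤ 20 := not_le.2 hx
  unfold sumBound
  split_ifs with h
  · have : 1 / x ≤ 1 / 20 := one_div_le_one_div_of_le (by norm_num) hx.le
    linarith
  · have : 2 / x ≤ 1 / y := by
      rw [div_le_div_iff₀ (by linarith) hy]
      linarith
    have : 2 / x = 1 / x + 1 / x := by ring
    linarith

lemma sum_inv_iterate_lam_le_sumBound_of_le_twenty {x : ℝ} (hx₄ : 4 ≤ x) (hx₂₀ : x ≤ 20) :
    ∑ i ∈ Finset.range (lstar x + 1), 1 / lam^[i] x ≤ sumBound x := by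
  have hcard : ((lstar x + 1 : ℕ) : ℝ) ≤ 7 := by
    exact_mod_cast Nat.succ_le_succ (lstar_le_six hx₄ hx₂₀)
  rw [sumBound, if_pos hx₂₀]
  calc ∑ i ∈ Finset.range (lstar x + 1), 1 / lam^[i] x ≤ ((lstar x + 1 : ℕ) : ℝ) / 4 :=
        sum_range_inv_iterate_lam_le hx₄ _
    _ ≤ 7 / 4 := by gcongr

lemma sum_inv_iterate_lam_le_sumBound {x : ℝ} (hx : 4 ≤ x) :
    ∑ i ∈ Finset.range (lstar x + 1), 1 / lam^[i] x ≤ sumBound x := by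
  obtain hx₂₀ | hx₂₀ := le_or_gt x 20
  · exact sum_inv_iterate_lam_le_sumBound_of_le_twenty hx hx₂₀
  induction hm : lstar x generalizing x with
  | zero =>
    have : 1 / x ≤ 1 / 20 := one_div_le_one_div_of_le (by norm_num) hx₂₀.le
    rw [zero_add, Finset.sum_range_one, Function.iterate_zero_apply, sumBound, if_neg hx₂₀.not_ge]
    linarith
  | succ m ih =>
    have hlam : lstar (lam x) = m := Nat.succ_injective ((lstar_lam_add_one (by omega)).trans hm)
    have htail : ∑ i ∈ Finset.range (m + 1), 1 / lam^[i] (lam x) ≤ sumBound (lam x) := by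
      obtain hlam₂₀ | hlam₂₀ := le_or_gt (lam x) 20
      · exact hlam ▸ sum_inv_iterate_lam_le_sumBound_of_le_twenty (four_le_lam hx) hlam₂₀
      · exact ih (four_le_lam hx) hlam₂₀ hlam
    calc ∑ i ∈ Finset.range (m + 1 + 1), 1 / lam^[i] x
        = 1 / x + ∑ i ∈ Finset.range (m + 1), 1 / lam^[i] (lam x) := by
          rw [Finset.sum_range_succ', add_comm]
          rfl
      _ ≤ 1 / x + sumBound (lam x) := by gcongr
      _ ≤ sumBound x :=
          inv_add_sumBound_le hx₂₀ (by linarith [four_le_lam hx]) (lam_le_half hx₂₀.le)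

theorem sum_inv_lam_iter_lt_two (x : ℝ) (hx : 5 ≤ x) :
    ∑ i ∈ Finset.range (lstar x + 1), 1 / lam^[i] x < 2 :=
  (sum_inv_iterate_lam_le_sumBound (by linarith)).trans_lt (sumBound_lt_two x)
end

section
/- Let X be a non-negative random variable and E ≥ max(E[X], 5). Define λ(x) = 3 ln x and λ*(E) the smallest k with λ^{(k)}(E) ≤ 5. Then either there exists 1 ≤ k ≤ λ*(E) with Pr(X < E - λ^{(k)}(E)) ≥ 1/((λ^{(k-1)}(E)+2)² + 1), or Pr(X < E + 10) ≥ 1/2. -/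
open MeasureTheory ProbabilityTheory Real

theorem exists_iterate_le_of_le_sub {f : ℝ → ℝ} {c δ : ℝ} (hδ : 0 < δ)
    (hf : ∀ x, c < x → f x ≤ x - δ) (x : ℝ) : ∃ k, f^[k] x ≤ c := by
  obtain ⟨n, hn⟩ := exists_nat_ge ((x - c) / δ)
  rw [div_le_iff₀ hδ] at hn
  induction n generalizing x with
  | zero => exact ⟨0, by simpa using hn⟩
  | succ n ih =>
    by_cases hx : x ≤ c
    · exact ⟨0, hx⟩
    · obtain ⟨k, hk⟩ := ih (f x) (by push_cast at hn; linarith [hf x (not_le.1 hx)])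
      exact ⟨k + 1, hk⟩

theorem lam_five_lt : lam 5 < 5 := by
  have h : (125 : ℝ) < exp 5 := by
    calc (125 : ℝ) < 2.7 ^ 5 := by norm_num
      _ < exp 1 ^ 5 := by gcongr; linarith [exp_one_gt_d9]
      _ = exp 5 := by rw [exp_one_pow]; norm_num
  rw [lam, ← Real.log_rpow (by norm_num), ← Real.log_exp 5]
  exact Real.log_lt_log (by norm_num) (by norm_num; linarith)

theorem lam_le_sub_of_five_le {x : ℝ} (hx : 5 ≤ x) : lam x ≤ x - (5 - lam 5) := by
  -- the tangent line of `log` at `5`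
  have h := Real.log_le_sub_one_of_pos (show 0 < x / 5 by positivity)
  rw [Real.log_div (by positivity) (by norm_num)] at h
  simp only [lam]
  linarith

theorem lam_pos {x : ℝ} (hx : 1 < x) : 0 < lam x :=
  mul_pos three_pos (Real.log_pos hx)

theorem lam_le_self {x : ℝ} (hx : 5 ≤ x) : lam x ≤ x := by
  linarith [lam_le_sub_of_five_le hx, lam_five_lt]

theorem lam_iterate_lstar_le (x : ℝ) : lam^[lstar x] x ≤ 5 :=
  Nat.sInf_mem <| exists_iterate_le_of_le_sub (sub_pos.2 lam_five_lt)
    (fun _ hy => lam_le_sub_of_five_le hy.le) x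

theorem five_lt_lam_iterate_of_lt_lstar {x : ℝ} {k : ℕ} (hk : k < lstar x) :
    5 < lam^[k] x :=
  not_le.1 (Nat.notMem_of_lt_sInf hk)

theorem lam_iterate_pos_of_le_lstar {x : ℝ} (hx : 5 ≤ x) {k : ℕ} (hk : k ≤ lstar x) :
    0 < lam^[k] x := by
  cases k with
  | zero => simpa using (by linarith : (0 : ℝ) < x)
  | succ k =>
    rw [Function.iterate_succ_apply']
    exact lam_pos (by linarith [five_lt_lam_iterate_of_lt_lstar (x := x) (k := k) (by omega)])

/-- `stopLoss μ X t = Pr(X ≥ t) · 𝔼[X - t | X ≥ t]`, the quantity bounded in the paper's induction. -/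
noncomputable def stopLoss {Ω : Type*} [MeasurableSpace Ω] (μ : Measure Ω) (X : Ω → ℝ) (t : ℝ) :
    ℝ :=
  ∫ ω, (X ω - t)⁺ ∂μ

section StopLoss

variable {Ω : Type*} [MeasurableSpace Ω] {μ : Measure Ω} {X : Ω → ℝ}

theorem stopLoss_nonneg (t : ℝ) : 0 ≤ stopLoss μ X t :=
  integral_nonneg fun _ => posPart_nonneg _

theorem stopLoss_zero (hX0 : ∀ ω, 0 ≤ X ω) : stopLoss μ X 0 = ∫ ω, X ω ∂μ := by
  simp only [stopLoss, sub_zero, posPart_eq_self.2 (hX0 _)]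

theorem stopLoss_add_mul_le [IsFiniteMeasure μ] (hXm : Measurable X) (hXint : Integrable X μ)
    (t s : ℝ) :
    stopLoss μ X s + (s - t) * μ.real {ω | s ≤ X ω} ≤ stopLoss μ X t := by
  have hint (r : ℝ) : Integrable (fun ω => (X ω - r)⁺) μ :=
    (hXint.sub (integrable_const r)).pos_part
  have hs : MeasurableSet {ω | s ≤ X ω} := measurableSet_le measurable_const hXm
  rw [stopLoss, stopLoss, mul_comm, ← smul_eq_mul, ← integral_indicator_const _ hs,
    ← integral_add (hint s) ((integrable_const _).indicator hs)]
  refine integral_mono ((hint s).add ((integrable_const _).indicator hs)) (hint t) fun ω => ?_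
  by_cases h : s ≤ X ω
  · simp only [Set.indicator_of_mem (show ω ∈ {ω | s ≤ X ω} from h),
      posPart_eq_self.2 (sub_nonneg.2 h)]
    linarith [le_posPart (X ω - t)]
  · simp only [Set.indicator_of_notMem (show ω ∉ {ω | s ≤ X ω} from h),
      posPart_eq_zero.2 (by linarith : X ω - s ≤ 0)]
    simp [posPart_nonneg]

variable [IsProbabilityMeasure μ]

theorem measureReal_lt_eq_one_sub (hXm : Measurable X) (t : ℝ) :
    μ.real {ω | X ω < t} = 1 - μ.real {ω | t ≤ X ω} := by
  rw [← probReal_compl_eq_one_sub (measurableSet_le measurable_const hXm)]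
  congr 1
  ext ω
  simp [not_le]

/-- Since `1 / ((a + 2) ^ 2 + 1) ≤ 1 / ((a + 2) (b + 2))`, the mass below the new threshold
costs at most the telescoping increment `1 / (b + 2) - 1 / (a + 2)`. -/
theorem stopLoss_sub_le_of_measureReal_le (hXm : Measurable X) (hXint : Integrable X μ)
    {E a b : ℝ} (hb : 0 < b) (hba : b ≤ a)
    (hp : μ.real {ω | X ω < E - b} ≤ 1 / ((a + 2) ^ 2 + 1)) :
    stopLoss μ X (E - b) - b - 1 / (b + 2) ≤ stopLoss μ X (E - a) - a - 1 / (a + 2) := by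
  have hstep := stopLoss_add_mul_le hXm hXint (E - a) (E - b)
  rw [measureReal_lt_eq_one_sub hXm] at hp
  have hgap : (a - b) * (1 - μ.real {ω | E - b ≤ X ω}) ≤ 1 / (b + 2) - 1 / (a + 2) :=
    calc (a - b) * (1 - μ.real {ω | E - b ≤ X ω})
        ≤ (a - b) * (1 / ((a + 2) * (b + 2))) := by
          refine mul_le_mul_of_nonneg_left (hp.trans ?_) (sub_nonneg.2 hba)
          exact one_div_le_one_div_of_le (mul_pos (by linarith) (by linarith)) (by nlinarith)
      _ = 1 / (b + 2) - 1 / (a + 2) := by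
          field_simp [(by linarith : a + 2 ≠ 0), (by linarith : b + 2 ≠ 0)]
          ring
  linarith

theorem stopLoss_sub_le_of_forall_measureReal_le (hXm : Measurable X) (hXint : Integrable X μ)
    {E : ℝ} {a : ℕ → ℝ} {n : ℕ} (ha : ∀ k < n, 0 < a (k + 1) ∧ a (k + 1) ≤ a k)
    (hp : ∀ k < n, μ.real {ω | X ω < E - a (k + 1)} ≤ 1 / ((a k + 2) ^ 2 + 1)) :
    stopLoss μ X (E - a n) - a n - 1 / (a n + 2) ≤
      stopLoss μ X (E - a 0) - a 0 - 1 / (a 0 + 2) := by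
  induction n with
  | zero => exact le_rfl
  | succ n ih =>
    obtain ⟨hpos, hle⟩ := ha n n.lt_succ_self
    exact (stopLoss_sub_le_of_measureReal_le hXm hXint hpos hle (hp n n.lt_succ_self)).trans
      (ih (fun k hk => ha k (by omega)) (fun k hk => hp k (by omega)))

end StopLoss

theorem core_thresholds {Ω : Type*} [MeasurableSpace Ω]
    (μ : Measure Ω) [IsProbabilityMeasure μ]
    (X : Ω → ℝ) (hXm : Measurable X) (hXint : Integrable X μ)
    (hX0 : ∀ ω, 0 ≤ X ω)
    (E : ℝ) (hE5 : 5 ≤ E) (hEX : (∫ ω, X ω ∂μ) ≤ E) :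
    (∃ k : ℕ, 1 ≤ k ∧ k ≤ lstar E ∧
        (μ {ω | X ω < E - lam^[k] E}).toReal
          ≥ 1 / ((lam^[k - 1] E + 2) ^ 2 + 1)) ∨
    (μ {ω | X ω < E + 10}).toReal ≥ 1 / 2 := by
  refine or_iff_not_imp_left.2 fun hfail => ?_
  push Not at hfail
  have hdescent := stopLoss_sub_le_of_forall_measureReal_le (μ := μ) hXm hXint (E := E)
    (a := fun k => lam^[k] E) (n := lstar E)
    (fun k hk => ⟨lam_iterate_pos_of_le_lstar hE5 hk, by
      rw [Function.iterate_succ_apply']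
      exact lam_le_self (five_lt_lam_iterate_of_lt_lstar hk).le⟩)
    (fun k hk => (hfail (k + 1) k.succ_pos hk).le)
  set aK := lam^[lstar E] E
  have haK_le : aK ≤ 5 := lam_iterate_lstar_le E
  have haK_pos : 0 < aK := lam_iterate_pos_of_le_lstar hE5 le_rfl
  simp only [Function.iterate_zero, id, sub_self, stopLoss_zero hX0] at hdescent
  have htail : (aK + 10) * μ.real {ω | E + 10 ≤ X ω} ≤ aK + 1 / 2 := by
    have hmarkov := stopLoss_add_mul_le hXm hXint (E - aK) (E + 10)
    have hinv : 1 / (aK + 2) ≤ 1 / 2 := one_div_le_one_div_of_le two_pos (by linarith)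
    have hinvE : 0 ≤ 1 / (E + 2) := by positivity
    linarith [stopLoss_nonneg (μ := μ) (X := X) (E + 10)]
  rw [ge_iff_le, ← measureReal_def, measureReal_lt_eq_one_sub hXm]
  nlinarith [measureReal_nonneg (μ := μ) (s := {ω | E + 10 ≤ X ω})]
end
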